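/- Let A and B be finite lists of complex numbers, let α, β be complex numbers, let X be real with 0 < X < 1, and let m, n ≥ 0 be integers. Then (A ∪ {−β})(m)·(B ∪ {−α})(n) − X^{−α−β}·(A ∪ {−β})(m−1)·(B ∪ {−α})(n−1) = (A ∪ {−β})(m)·B(n) + A(m)·(B ∪ {−α})(n) − A(m)·B(n), where by convention a coefficient at argument −1 is 0. -/

import Mathlib

/-! Adjoining `γ` to `A` multiplies the generating series `Σ A(n) Tⁿ` by `1 / (1 - X^γ T)`, so
`(A ∪ {γ})(n) = A(n) + X^γ · (A ∪ {γ})(n - 1)` for every integer `n`. Substituting this recurrence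
for `A ∪ {-β}` at `m` and for `B ∪ {-α}` at `n`, and using `X^{-α-β} = X^{-β} X^{-α}`, both sides
become the same polynomial in the remaining coefficients. -/

open scoped BigOperators

/-- The complex power `X ^ w := exp(w · log X)` of a real number `X`. -/
noncomputable def cpowX (X : ℝ) (w : ℂ) : ℂ := Complex.exp (w * (Real.log X : ℂ))

/-- The local divisor coefficient `A(n) = Σ_{n₁+⋯+n_k = n} X^{a₁n₁+⋯+a_k n_k}` attached to a
finite list `A` of complex shifts; it is `0` for negative `n`. -/
noncomputable def locCoeff (X : ℝ) (A : List ℂ) (n : ℤ) : ℂ :=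
  if 0 ≤ n then
    ∑ t ∈ Finset.Nat.antidiagonalTuple A.length n.toNat,
      cpowX X (∑ i : Fin A.length, A.get i * (t i : ℂ))
  else 0

open Finset

namespace Finset.Nat

theorem sum_antidiagonalTuple_succ {M : Type*} [AddCommMonoid M] (k n : ℕ)
    (f : (Fin (k + 1) → ℕ) → M) :
    ∑ t ∈ antidiagonalTuple (k + 1) n, f t
      = ∑ p ∈ antidiagonal n, ∑ s ∈ antidiagonalTuple k p.1, f (Fin.snoc s p.2) := by
  rw [sum_sigma']
  refine sum_nbij' (fun t => ⟨(∑ i : Fin k, t i.castSucc, t (Fin.last k)), Fin.init t⟩)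
    (fun q => Fin.snoc q.2 q.1.2) ?_ ?_ ?_ ?_ ?_
  · intro t ht
    simp only [mem_antidiagonalTuple, Fin.sum_univ_castSucc] at ht
    simp [ht, mem_antidiagonalTuple, Fin.init]
  · rintro ⟨⟨i, j⟩, s⟩ hq
    simp only [mem_sigma, HasAntidiagonal.mem_antidiagonal, mem_antidiagonalTuple] at hq
    simp [mem_antidiagonalTuple, Fin.sum_univ_castSucc, hq]
  · intro t _
    exact Fin.snoc_init_self t
  · rintro ⟨⟨i, j⟩, s⟩ hq
    simp only [mem_sigma, HasAntidiagonal.mem_antidiagonal, mem_antidiagonalTuple] at hq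
    simp [hq.2]
  · intro t _
    rw [Fin.snoc_init_self]

end Finset.Nat

theorem cpowX_add (X : ℝ) (a b : ℂ) : cpowX X (a + b) = cpowX X a * cpowX X b := by
  simp [cpowX, add_mul, Complex.exp_add]

theorem cpowX_mul_natCast (X : ℝ) (a : ℂ) (j : ℕ) : cpowX X (a * j) = cpowX X a ^ j := by
  rw [cpowX, cpowX, ← Complex.exp_nat_mul]
  ring_nf

theorem locCoeff_natCast_of_length_eq (X : ℝ) (L : List ℂ) {k : ℕ} (h : L.length = k) (n : ℕ) :
    locCoeff X L n
      = ∑ t ∈ Nat.antidiagonalTuple k n, cpowX X (∑ i : Fin k, L[(i : ℕ)] * (t i : ℂ)) := by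
  subst h
  simp [locCoeff]

theorem locCoeff_append_singleton_natCast (X : ℝ) (A : List ℂ) (γ : ℂ) (n : ℕ) :
    locCoeff X (A ++ [γ]) n
      = ∑ p ∈ antidiagonal n, locCoeff X A p.1 * cpowX X γ ^ p.2 := by
  rw [locCoeff_natCast_of_length_eq X _ (k := A.length + 1) (by simp),
    Nat.sum_antidiagonalTuple_succ]
  refine sum_congr rfl fun p _ => ?_
  simp [locCoeff_natCast_of_length_eq X A rfl, sum_mul, Fin.sum_univ_castSucc,
    List.getElem_append_left, cpowX_add, cpowX_mul_natCast]

theorem locCoeff_append_singleton (X : ℝ) (A : List ℂ) (γ : ℂ) (n : ℤ) :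
    locCoeff X (A ++ [γ]) n = locCoeff X A n + cpowX X γ * locCoeff X (A ++ [γ]) (n - 1) := by
  rcases n with (_ | n) | n
  · simp [locCoeff, Nat.antidiagonalTuple_zero_right]
  · rw [Int.ofNat_eq_natCast, Nat.cast_succ, add_sub_cancel_right, ← Nat.cast_succ,
      locCoeff_append_singleton_natCast, locCoeff_append_singleton_natCast,
      Nat.sum_antidiagonal_succ', mul_sum]
    simp only [pow_zero, mul_one]
    congr 1
    exact sum_congr rfl fun p _ => by ring
  · simp [locCoeff]

theorem stmt11_general (A B : List ℂ) (α β : ℂ) (X : ℝ) (m n : ℕ) :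
    locCoeff X (A ++ [-β]) (m : ℤ) * locCoeff X (B ++ [-α]) (n : ℤ)
      - cpowX X (-α - β) * locCoeff X (A ++ [-β]) ((m : ℤ) - 1) *
          locCoeff X (B ++ [-α]) ((n : ℤ) - 1)
    = locCoeff X (A ++ [-β]) (m : ℤ) * locCoeff X B (n : ℤ)
      + locCoeff X A (m : ℤ) * locCoeff X (B ++ [-α]) (n : ℤ)
      - locCoeff X A (m : ℤ) * locCoeff X B (n : ℤ) := by
  rw [locCoeff_append_singleton X A (-β) m, locCoeff_append_singleton X B (-α) n,
    show -α - β = -β + -α by ring, cpowX_add]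
  ring

/-- The coefficient identity used in Lemma 3:
`(A∪{-β})(m)(B∪{-α})(n) - X^{-α-β}(A∪{-β})(m-1)(B∪{-α})(n-1)
 = (A∪{-β})(m)B(n) + A(m)(B∪{-α})(n) - A(m)B(n)`. -/
theorem stmt11 (A B : List ℂ) (α β : ℂ) (X : ℝ) (hX0 : 0 < X) (hX1 : X < 1) (m n : ℕ) :
    locCoeff X (A ++ [-β]) (m : ℤ) * locCoeff X (B ++ [-α]) (n : ℤ)
      - cpowX X (-α - β) * locCoeff X (A ++ [-β]) ((m : ℤ) - 1) *
          locCoeff X (B ++ [-α]) ((n : ℤ) - 1)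
    = locCoeff X (A ++ [-β]) (m : ℤ) * locCoeff X B (n : ℤ)
      + locCoeff X A (m : ℤ) * locCoeff X (B ++ [-α]) (n : ℤ)
      - locCoeff X A (m : ℤ) * locCoeff X B (n : ℤ) :=
  stmt11_general A B α β X m n
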